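/- arXiv:0801.3058 — 2 statements merged into one kernel-verified Lean document; each statement's English description precedes it below -/
import Mathlib

section
/- Let X be a topological space and let (W_j)_{j ∈ ℕ} be a family of connected subsets of X such that: (1) each W_j has no cut points, i.e. W_j \ {y} is connected for every y ∈ W_j; (2) for any i, j there is a finite chain j = j_1, ..., j_n = i with |W_{j_k} ∩ W_{j_{k+1}}| ≥ 2 for all k. Then for every point x ∈ X, the union ⋃_{j} (W_j \ {x}) is connected. -/
/-- A union of connected sets without cut points, chained pairwise through intersections
of at least two points, remains connected after removing any single point. -/
theorem isPreconnected_iUnion_diff_singleton {X : Type*} [TopologicalSpace X]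
    (W : ℕ → Set X) (hconn : ∀ j, IsConnected (W j))
    (hnocut : ∀ j, ∀ y ∈ W j, IsPreconnected (W j \ {y}))
    (hchain : ∀ i j : ℕ, ∃ (n : ℕ) (f : ℕ → ℕ), f 0 = j ∧ f n = i ∧
      ∀ k < n, ∃ p q : X, p ≠ q ∧ p ∈ W (f k) ∩ W (f (k + 1)) ∧
        q ∈ W (f k) ∩ W (f (k + 1))) :
    ∀ x : X, IsPreconnected (⋃ j, W j \ {x}) := by
  intro x
  have hpc : ∀ j, IsPreconnected (W j \ {x}) := by
    intro j
    by_cases hx : x ∈ W j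
    · exact hnocut j x hx
    · rw [Set.diff_singleton_eq_self hx]
      exact (hconn j).isPreconnected
  apply isPreconnected_of_forall_pair
  intro a ha b hb
  rcases Set.mem_iUnion.1 ha with ⟨i, hai⟩
  rcases Set.mem_iUnion.1 hb with ⟨j, hbj⟩
  obtain ⟨n, f, hf0, hfn, hstep⟩ := hchain i j
  have key : ∀ m ≤ n, IsPreconnected (⋃ k ≤ m, W (f k) \ {x}) := by
    intro m hm
    induction m with
    | zero => simpa using hpc (f 0)
    | succ m ih =>
      rw [Set.biUnion_le_succ]
      obtain ⟨p, q, hpq, hp, hq⟩ := hstep m (Nat.lt_of_succ_le hm)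
      have : ∃ z, z ≠ x ∧ z ∈ W (f m) ∩ W (f (m + 1)) := by
        by_cases hpx : p = x
        · exact ⟨q, by rintro rfl; exact hpq hpx.symm.symm, hq⟩
        · exact ⟨p, hpx, hp⟩
      obtain ⟨z, hz, hz1, hz2⟩ := this
      refine IsPreconnected.union z ?_ ⟨hz2, hz⟩ (ih (le_of_lt (Nat.lt_of_succ_le hm))) (hpc _)
      exact Set.mem_biUnion (le_refl m) ⟨hz1, hz⟩
  refine ⟨⋃ k ≤ n, W (f k) \ {x}, ?_, ?_, ?_, key n le_rfl⟩
  · intro z hz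
    simp only [Set.mem_iUnion] at hz ⊢
    obtain ⟨k, _, hk⟩ := hz
    exact ⟨f k, hk⟩
  · exact Set.mem_biUnion (le_refl n) (hfn ▸ hai)
  · exact Set.mem_biUnion (Nat.zero_le n) (hf0 ▸ hbj)
end

section
/- Let X be a topological space, ψ : X → X a homeomorphism, and p, q ∈ X distinct points such that the iterates ψ^n converge uniformly on compact subsets of X \ {q} to the constant map with value p; that is, for every compact K ⊆ X \ {q} and every open neighborhood V of p, there is N such that ψ^n(K) ⊆ V for all n ≥ N. Let g : [0,1] → X \ {q} be a continuous path with g(1) = ψ(g(0)). Define h : [0,1] → X by h(t) = ψ^k(g(2^{k+1}(t - 1 + 2^{-k}))) for t ∈ [1 - 2^{-k}, 1 - 2^{-k-1}] (k = 0, 1, 2, ...) and h(1) = p. Then h is continuous. -/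
private lemma two_zpow_eq (k : ℕ) : (2:ℝ)^(-(k:ℤ)) = (1/2:ℝ)^k := by
  rw [zpow_neg, zpow_natCast, one_div, inv_pow]

private lemma aux_exists_k {s : ℝ} (h0 : 0 < s) (h1 : s ≤ 1) :
    ∃ k : ℕ, (2:ℝ)^(-(k:ℤ)-1) < s ∧ s ≤ (2:ℝ)^(-(k:ℤ)) ∧
      ∀ N : ℕ, s ≤ (2:ℝ)^(-(N:ℤ)) → N ≤ k := by
  have hex : ∃ m : ℕ, (1/2:ℝ)^m < s :=
    exists_pow_lt_of_lt_one h0 (by norm_num : (1/2:ℝ) < 1)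
  classical
  have hms : (1/2:ℝ)^(Nat.find hex) < s := Nat.find_spec hex
  have hm0 : Nat.find hex ≠ 0 := by
    intro h
    rw [h] at hms; simp at hms; linarith
  obtain ⟨k, hk1⟩ := Nat.exists_eq_succ_of_ne_zero hm0
  rw [hk1] at hms
  have hk : ¬ (1/2:ℝ)^k < s := Nat.find_min hex (by omega)
  refine ⟨k, ?_, by rw [two_zpow_eq]; linarith, ?_⟩
  · have heq : (-(k:ℤ)-1) = (-(↑(k+1) : ℤ)) := by push_cast; ring
    rw [heq, two_zpow_eq]; exact hms
  · intro N hN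
    by_contra hNk
    push_neg at hNk
    have : (1/2:ℝ)^N < s := by
      calc (1/2:ℝ)^N ≤ (1/2:ℝ)^(k+1) :=
        pow_le_pow_of_le_one (by norm_num) (by norm_num) hNk
      _ < s := hms
    rw [two_zpow_eq] at hN; linarith

set_option maxHeartbeats 1000000 in
/-- The infinite concatenation of the `ψ`-iterates of a path `g` with `g 1 = ψ (g 0)`,
capped off with the attracting point `p`, is continuous. -/
theorem continuous_infinite_concatenation {X : Type*} [TopologicalSpace X]
    (ψ : X ≃ₜ X) (p q : X) (hpq : p ≠ q)
    (hconv : ∀ K : Set X, K ⊆ {q}ᶜ → IsCompact K → ∀ V ∈ nhds p,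
      ∃ N : ℕ, ∀ n ≥ N, ∀ x ∈ K, (⇑ψ)^[n] x ∈ V)
    (g : unitInterval → X) (hg : Continuous g) (hgq : ∀ t, g t ≠ q)
    (hg1 : g 1 = ψ (g 0))
    (h : unitInterval → X)
    (hformula : ∀ (k : ℕ) (t : unitInterval),
      1 - (2 : ℝ) ^ (-(k : ℤ)) ≤ (t : ℝ) → (t : ℝ) ≤ 1 - (2 : ℝ) ^ (-(k : ℤ) - 1) →
      h t = (⇑ψ)^[k] (g (Set.projIcc (0 : ℝ) 1 zero_le_one
        ((2 : ℝ) ^ ((k : ℤ) + 1) * ((t : ℝ) - 1 + (2 : ℝ) ^ (-(k : ℤ)))))))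
    (h1 : h 1 = p) :
    Continuous h := by
  -- the pieces
  set I : ℕ → Set unitInterval := fun k =>
    {t : unitInterval | 1 - (2:ℝ)^(-(k:ℤ)) ≤ (t:ℝ) ∧ (t:ℝ) ≤ 1 - (2:ℝ)^(-(k:ℤ)-1)} with hI
  have hIclosed : ∀ k, IsClosed (I k) := by
    intro k
    have : I k = (fun t : unitInterval => (t:ℝ)) ⁻¹'
        (Set.Icc (1 - (2:ℝ)^(-(k:ℤ))) (1 - (2:ℝ)^(-(k:ℤ)-1))) := rfl
    rw [this]
    exact isClosed_Icc.preimage continuous_subtype_val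
  have hIcont : ∀ k, ContinuousOn h (I k) := by
    intro k
    have hc : Continuous fun t : unitInterval => (⇑ψ)^[k] (g (Set.projIcc (0 : ℝ) 1 zero_le_one
        ((2 : ℝ) ^ ((k : ℤ) + 1) * ((t : ℝ) - 1 + (2 : ℝ) ^ (-(k : ℤ)))))) := by
      refine (ψ.continuous.iterate k).comp (hg.comp (continuous_projIcc.comp ?_))
      continuity
    exact hc.continuousOn.congr fun t ht => hformula k t ht.1 ht.2
  -- continuity on initial segments
  have hJ : ∀ n : ℕ, ContinuousOn h {t : unitInterval | (t:ℝ) ≤ 1 - (2:ℝ)^(-(n:ℤ)-1)} := by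
    intro n
    induction n with
    | zero =>
      refine (hIcont 0).mono ?_
      intro t ht
      refine ⟨?_, ht⟩
      simpa using t.2.1
    | succ n ih =>
      set Jn : Set unitInterval := {t : unitInterval | (t:ℝ) ≤ 1 - (2:ℝ)^(-(n:ℤ)-1)} with hJn
      have hJnclosed : IsClosed Jn :=
        isClosed_Iic.preimage continuous_subtype_val
      intro t ht
      have hsub : {t : unitInterval | (t:ℝ) ≤ 1 - (2:ℝ)^(-(↑(n+1):ℤ)-1)} ⊆ Jn ∪ I (n+1) := by
        intro u hu
        rcases le_or_gt (u:ℝ) (1 - (2:ℝ)^(-(n:ℤ)-1)) with h' | h'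
        · exact Or.inl h'
        · refine Or.inr ⟨?_, ?_⟩
          · have : (-(↑(n+1):ℤ)) = -(n:ℤ)-1 := by push_cast; ring
            rw [this]; exact le_of_lt h'
          · exact hu
      have cw1 : ContinuousWithinAt h Jn t := by
        by_cases htJ : t ∈ Jn
        · exact ih t htJ
        · exact continuousWithinAt_of_notMem_closure (by rwa [hJnclosed.closure_eq])
      have cw2 : ContinuousWithinAt h (I (n+1)) t := by
        by_cases htI : t ∈ I (n+1)
        · exact hIcont (n+1) t htI
        · exact continuousWithinAt_of_notMem_closure (by rwa [(hIclosed (n+1)).closure_eq])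
      exact (cw1.union cw2).mono hsub
  rw [continuous_iff_continuousAt]
  intro x
  rcases lt_or_eq_of_le x.2.2 with hx | hx
  · -- x < 1 : interior point of some initial segment
    obtain ⟨n, hn⟩ := exists_pow_lt_of_lt_one (by linarith : (0:ℝ) < 1 - x)
      (by norm_num : (1/2:ℝ) < 1)
    have h2n : (2:ℝ)^(-(n:ℤ)-1) < 1 - (x:ℝ) := by
      have h1 : (2:ℝ)^(-(n:ℤ)-1) < (2:ℝ)^(-(n:ℤ)) :=
        zpow_lt_zpow_right₀ (by norm_num) (by omega)
      rw [two_zpow_eq] at h1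
      linarith
    refine (hJ n).continuousAt ?_
    have hopen : IsOpen {t : unitInterval | (t:ℝ) < 1 - (2:ℝ)^(-(n:ℤ)-1)} :=
      isOpen_Iio.preimage continuous_subtype_val
    refine Filter.mem_of_superset (hopen.mem_nhds ?_) ?_
    · show (x:ℝ) < 1 - (2:ℝ)^(-(n:ℤ)-1)
      linarith
    · intro u hu
      have hu' : (u:ℝ) < 1 - (2:ℝ)^(-(n:ℤ)-1) := hu
      exact le_of_lt hu'
  · -- x = 1
    have hx1 : x = 1 := Subtype.ext hx
    subst hx1
    intro V hV
    rw [h1] at hV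
    obtain ⟨N, hN⟩ := hconv (Set.range g) (by rintro _ ⟨t, rfl⟩; exact hgq t)
      (isCompact_range hg) V hV
    have hopen : IsOpen {t : unitInterval | 1 - (2:ℝ)^(-(N:ℤ)) < (t:ℝ)} :=
      isOpen_Ioi.preimage continuous_subtype_val
    have h1mem : (1:unitInterval) ∈ {t : unitInterval | 1 - (2:ℝ)^(-(N:ℤ)) < (t:ℝ)} := by
      have hp : (0:ℝ) < (2:ℝ)^(-(N:ℤ)) := zpow_pos (by norm_num) _
      show 1 - (2:ℝ)^(-(N:ℤ)) < ((1:unitInterval):ℝ)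
      rw [hx]
      linarith
    refine Filter.mem_map.mpr (Filter.mem_of_superset (hopen.mem_nhds h1mem) ?_)
    intro t ht
    have ht' : 1 - (2:ℝ)^(-(N:ℤ)) < (t:ℝ) := ht
    rcases lt_or_eq_of_le t.2.2 with ht1 | ht1
    · -- t < 1
      have hs0 : 0 < 1 - (t:ℝ) := by linarith
      have hs1 : 1 - (t:ℝ) ≤ 1 := by have := t.2.1; linarith
      obtain ⟨k, hk1, hk2, hk3⟩ := aux_exists_k hs0 hs1
      have hkN : N ≤ k := hk3 N (by linarith)
      have hht : h t = (⇑ψ)^[k] (g (Set.projIcc (0 : ℝ) 1 zero_le_one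
          ((2 : ℝ) ^ ((k : ℤ) + 1) * ((t : ℝ) - 1 + (2 : ℝ) ^ (-(k : ℤ)))))) :=
        hformula k t (by linarith) (by linarith)
      show h t ∈ V
      rw [hht]
      exact hN k hkN _ ⟨_, rfl⟩
    · have : t = 1 := Subtype.ext ht1
      subst this
      simpa [h1] using mem_of_mem_nhds hV
end
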